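/- arXiv:1207.1330 — 3 statements merged into one kernel-verified Lean document; each statement's English description precedes it below -/
import Mathlib

section
/- Let Γ be a finite ranked poset with minimal element * such that for all a < b with rk(b) − rk(a) ≥ 3 the open interval (a,b) is connected as a graph under the comparability relation (equivalently, the order complex of (a,b) is connected). Then for all a < b the closed interval [a,b] is uniform; in particular Γ itself is uniform. -/
open scoped Classical DirectSum
noncomputable section
namespace SplittingAlg

variable (F : Type) [Field F]

/-! ### Order complex cochains of a finite poset -/

variable (P : Type) [Fintype P] [PartialOrder P]

/-- An `n`-cell of the order complex: a strictly increasing chain of `n+1` elements. -/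
def Cell (n : ℕ) : Type := {b : Fin (n + 1) → P // StrictMono b}

instance (n : ℕ) : Fintype (Cell P n) := by unfold Cell; infer_instance

/-- Simplicial `n`-cochains with coefficients in `F`. -/
def Coch (n : ℕ) : Type := Cell P n →₀ F

instance (n : ℕ) : AddCommGroup (Coch F P n) := Finsupp.instAddCommGroup
instance (n : ℕ) : Module F (Coch F P n) := Finsupp.module _ _

/-- Evaluation of a cochain on a cell. -/
def capp (n : ℕ) (f : Coch F P n) (b : Cell P n) : F := @Finsupp.toFun (Cell P n) F _ f b

/-- The coboundary of a basis cell: the signed sum of all insertions of elements of `P`. -/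
def insChain (n : ℕ) (b : Cell P n) : Coch F P (n + 1) :=
  ∑ x : P, ∑ j : Fin (n + 2),
    if h : StrictMono (j.insertNth x b.1)
    then ((-1 : F) ^ (j : ℕ)) • Finsupp.single (⟨j.insertNth x b.1, h⟩ : Cell P (n + 1)) (1 : F)
    else 0

/-- The simplicial coboundary map. -/
def cob (n : ℕ) : Coch F P n →ₗ[F] Coch F P (n + 1) :=
  Finsupp.linearCombination F (insChain F P n)

/-- Cocycles. -/
def Zc (n : ℕ) : Submodule F (Coch F P n) := LinearMap.ker (cob F P n)

/-- Coboundaries (unreduced). -/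
def Bc : (n : ℕ) → Submodule F (Coch F P n)
  | 0 => ⊥
  | n + 1 => LinearMap.range (cob F P n)

/-- Unreduced simplicial cohomology of the order complex of `P`. -/
abbrev Hc (n : ℕ) := Zc F P n ⧸ (Bc F P n).comap (Zc F P n).subtype

/-- The vertex cell attached to `v`. -/
def vert (v : P) : Cell P 0 :=
  ⟨fun _ => v, by intro i j h; exact absurd (Fin.ext (by omega)) h.ne⟩

/-- Coboundaries (reduced): in degree `0` we also quotient by the image of the augmentation. -/
def Bred : (n : ℕ) → Submodule F (Coch F P n)
  | 0 => Submodule.span F {∑ v : P, Finsupp.single (vert P v) (1 : F)}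
  | n + 1 => LinearMap.range (cob F P n)

/-- Reduced simplicial cohomology of the order complex of `P`. -/
abbrev Hred (n : ℕ) := Zc F P n ⧸ (Bred F P n).comap (Zc F P n).subtype

/-! ### Ranked and uniform posets -/

/-- `rk` is a rank function: covers raise rank by exactly one. -/
def RankedWith (rk : P → ℕ) : Prop := ∀ x y : P, x ⋖ y → rk y = rk x + 1

/-- The poset is uniform: for each `x`, any two elements covered by `x` are connected by the
equivalence relation generated by "covering a common element". -/
def Uniform : Prop :=
  ∀ x a b : P, a ⋖ x → b ⋖ x →
    Relation.EqvGen (fun u w => u ⋖ x ∧ w ⋖ x ∧ ∃ c, c ⋖ u ∧ c ⋖ w) a b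

/-- The closed interval `[a,b]` is uniform as a ranked poset with minimal element `a`. -/
def UniformInterval (a b : P) : Prop :=
  ∀ x, a ≤ x → x ≤ b → ∀ c₁ c₂, (a ≤ c₁ ∧ c₁ ⋖ x) → (a ≤ c₂ ∧ c₂ ⋖ x) →
    Relation.EqvGen
      (fun u w => a ≤ u ∧ u ⋖ x ∧ a ≤ w ∧ w ⋖ x ∧ ∃ z, a ≤ z ∧ z ⋖ u ∧ z ⋖ w) c₁ c₂

end SplittingAlg
namespace SplittingAlg

/-! Fix `x`; the claim is that the coatoms of `x` lying above `a` form one class, and we prove it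
by downward induction on `a`. If `rk x - rk a ≤ 2` this is forced by the ranks: either `a` is the
only such coatom, or all of them cover `a`. Otherwise every coatom lies in the open interval
`(a, x)`, and we walk from `c₁` to `c₂` along a comparability path in `(a, x)`. Across a step
between comparable `w` and `v`, the coatoms above `w` and those above `v` all lie above the
smaller of `w`, `v`, which lies in `(a, x)`, so the induction hypothesis there puts them in a
single class. -/

variable {Γ : Type} [PartialOrder Γ]

def CoatomsShareCover (a x u w : Γ) : Prop :=
  a ≤ u ∧ u ⋖ x ∧ a ≤ w ∧ w ⋖ x ∧ ∃ z, a ≤ z ∧ z ⋖ u ∧ z ⋖ w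

def CoatomsConnected (a x : Γ) : Prop :=
  ∀ c₁ c₂, a ≤ c₁ → c₁ ⋖ x → a ≤ c₂ → c₂ ⋖ x → Relation.EqvGen (CoatomsShareCover a x) c₁ c₂

def IntervalComparable (a b u w : Γ) : Prop :=
  a < u ∧ u < b ∧ a < w ∧ w < b ∧ (u < w ∨ w < u)

theorem CoatomsShareCover.mono_left {a b x u w : Γ} (hab : a ≤ b)
    (h : CoatomsShareCover b x u w) : CoatomsShareCover a x u w :=
  let ⟨hbu, hu, hbw, hw, z, hbz, hzu, hzw⟩ := h
  ⟨hab.trans hbu, hu, hab.trans hbw, hw, z, hab.trans hbz, hzu, hzw⟩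

theorem CoatomsConnected.eqvGen_of_le {a w x u v : Γ} (h : CoatomsConnected w x) (haw : a ≤ w)
    (hwu : w ≤ u) (hu : u ⋖ x) (hwv : w ≤ v) (hv : v ⋖ x) :
    Relation.EqvGen (CoatomsShareCover a x) u v :=
  (h u v hwu hu hwv hv).mono fun _ _ => CoatomsShareCover.mono_left haw

theorem eqvGen_coatomsShareCover_of_reflTransGen [IsStronglyCoatomic Γ] {a x c w : Γ}
    (hup : ∀ m, a < m → m < x → CoatomsConnected m x) (hc : c ⋖ x)
    (hpath : Relation.ReflTransGen (IntervalComparable a x) c w) :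
    ∀ e, w ≤ e → e ⋖ x → Relation.EqvGen (CoatomsShareCover a x) c e := by
  induction hpath with
  | refl =>
    intro e hce he
    obtain rfl | hlt := hce.eq_or_lt
    · exact .refl _
    · exact absurd he.lt (hc.2 hlt)
  | @tail w v _ hstep ih =>
    intro e hve he
    obtain ⟨haw, hwx, hav, hvx, hwv⟩ := hstep
    obtain ⟨f, hwf, hf⟩ := exists_le_covBy_of_lt hwx
    refine .trans _ f _ (ih f hwf hf) ?_
    rcases hwv with hwv | hvw
    · exact (hup w haw hwx).eqvGen_of_le haw.le hwf hf (hwv.le.trans hve) he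
    · exact (hup v hav hvx).eqvGen_of_le hav.le (hvw.le.trans hwf) hf hve he

namespace RankedWith

variable [LocallyFiniteOrder Γ] {rk : Γ → ℕ}

theorem strictMono (hrk : RankedWith Γ rk) : StrictMono rk :=
  (strictMono_iff_forall_covBy rk).2 fun a b h => by rw [hrk a b h]; omega

theorem eq_of_le_of_rk_eq (hrk : RankedWith Γ rk) {a b : Γ} (hab : a ≤ b) (h : rk a = rk b) :
    a = b :=
  hab.eq_or_lt.resolve_right fun hlt => (hrk.strictMono hlt).ne h

theorem covBy_of_lt (hrk : RankedWith Γ rk) {a b : Γ} (hab : a < b) (h : rk b = rk a + 1) :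
    a ⋖ b :=
  ⟨hab, fun c hac hcb => by
    have := hrk.strictMono hac
    have := hrk.strictMono hcb
    omega⟩

theorem coatomsConnected_of_rk_le (hrk : RankedWith Γ rk) {a x : Γ} (h : rk x ≤ rk a + 2) :
    CoatomsConnected a x := by
  intro c₁ c₂ hac₁ hc₁ hac₂ hc₂
  have hr₁ := hrk _ _ hc₁
  have hr₂ := hrk _ _ hc₂
  obtain rfl | hlt₁ := hac₁.eq_or_lt
  · obtain rfl := hrk.eq_of_le_of_rk_eq hac₂ (by omega)
    exact .refl _
  · have := hrk.strictMono hlt₁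
    have hlt₂ : a < c₂ := hac₂.lt_of_ne fun h => by subst h; omega
    exact .rel _ _ ⟨hac₁, hc₁, hac₂, hc₂, a, le_rfl, hrk.covBy_of_lt hlt₁ (by omega),
      hrk.covBy_of_lt hlt₂ (by omega)⟩

end RankedWith

theorem coatomsConnected_of_intervals_connected [Finite Γ] {rk : Γ → ℕ} (hrk : RankedWith Γ rk)
    (hconn : ∀ a b : Γ, a < b → rk a + 3 ≤ rk b →
      ∀ x y : Γ, a < x → x < b → a < y → y < b →
        Relation.ReflTransGen (IntervalComparable a b) x y)
    (a x : Γ) : CoatomsConnected a x := by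
  cases nonempty_fintype Γ
  let _ : LocallyFiniteOrder Γ := Fintype.toLocallyFiniteOrder
  induction a using WellFoundedGT.induction with
  | _ a ih =>
  by_cases hsmall : rk x ≤ rk a + 2
  · exact hrk.coatomsConnected_of_rk_le hsmall
  intro c₁ c₂ hac₁ hc₁ hac₂ hc₂
  have hlt : ∀ c, a ≤ c → c ⋖ x → a < c := fun c hac hc =>
    hac.lt_of_ne fun h => by subst h; have := hrk _ _ hc; omega
  have hax := (hlt c₁ hac₁ hc₁).trans hc₁.lt
  exact eqvGen_coatomsShareCover_of_reflTransGen (fun m ham _ => ih m ham) hc₁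
    (hconn a x hax (by omega) c₁ c₂ (hlt c₁ hac₁ hc₁) hc₁.lt (hlt c₂ hac₂ hc₂) hc₂.lt) c₂ le_rfl hc₂

theorem uniform_of_intervals_connected_general (Γ : Type) [Fintype Γ] [PartialOrder Γ] [OrderBot Γ]
    (rk : Γ → ℕ) (hrk : RankedWith Γ rk)
    (hconn : ∀ a b : Γ, a < b → rk a + 3 ≤ rk b →
      ∀ x y : Γ, a < x → x < b → a < y → y < b →
        Relation.ReflTransGen
          (fun u w => a < u ∧ u < b ∧ a < w ∧ w < b ∧ (u < w ∨ w < u)) x y) :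
    (∀ a b : Γ, a < b → UniformInterval Γ a b) ∧ Uniform Γ := by
  have key := coatomsConnected_of_intervals_connected hrk hconn
  refine ⟨fun a _ _ x _ _ c₁ c₂ h₁ h₂ => key a x c₁ c₂ h₁.1 h₁.2 h₂.1 h₂.2, fun x a b ha hb => ?_⟩
  exact (key ⊥ x a b bot_le ha bot_le hb).mono
    fun _ _ ⟨_, hu, _, hw, z, _, hzu, hzw⟩ => ⟨hu, hw, z, hzu, hzw⟩

/-- If for all `a < b` with `rk b − rk a ≥ 3` the open interval `(a,b)` is
connected as a graph under comparability, then every closed interval `[a,b]` is uniform;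
in particular `Γ` itself is uniform. -/
theorem uniform_of_intervals_connected (Γ : Type) [Fintype Γ] [PartialOrder Γ] [OrderBot Γ]
    (rk : Γ → ℕ) (hrk0 : rk ⊥ = 0) (hrk : RankedWith Γ rk)
    (hconn : ∀ a b : Γ, a < b → rk a + 3 ≤ rk b →
      ∀ x y : Γ, a < x → x < b → a < y → y < b →
        Relation.ReflTransGen
          (fun u w => a < u ∧ u < b ∧ a < w ∧ w < b ∧ (u < w ∨ w < u)) x y) :
    (∀ a b : Γ, a < b → UniformInterval Γ a b) ∧ Uniform Γ :=
  uniform_of_intervals_connected_general Γ rk hrk hconn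

end SplittingAlg
end
end

section
/- Let Γ be a finite ranked poset with minimal element *, and for k ≥ 0 let Γ^{>k} = {y ∈ Γ : rk(y) > k} ∪ {*} with the induced order, where rk restricted to Γ^{>k} \ {*} is given by rk(a) − k. If Γ is uniform then Γ^{>k} is a uniform ranked poset. -/
open scoped Classical DirectSum
noncomputable section
namespace SplittingAlg

section Aux

variable {Γ : Type} [Fintype Γ] [PartialOrder Γ]

private lemma rk_lt_of_lt_aux (rk : Γ → ℕ) (hrk : RankedWith Γ rk) :
    ∀ n (a b : Γ), rk b = n → a < b → rk a < rk b := by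
  intro n
  induction n using Nat.strong_induction_on with
  | _ n ih =>
    intro a b hn hab
    obtain ⟨c, hac, hcb⟩ := exists_le_covBy_of_lt hab
    have h1 : rk b = rk c + 1 := hrk c b hcb
    rcases eq_or_lt_of_le hac with rfl | h
    · omega
    · have := ih (rk c) (by omega) a c rfl h
      omega

private lemma rk_lt_of_lt (rk : Γ → ℕ) (hrk : RankedWith Γ rk) {a b : Γ} (hab : a < b) :
    rk a < rk b := rk_lt_of_lt_aux rk hrk (rk b) a b rfl hab

end Aux

/-- If `Γ` is uniform then the poset `Γ^{>k} = {y : rk y > k} ∪ {⊥}` (with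
the induced order) is again a uniform ranked poset, with rank function `a ↦ rk a − k`
(and `⊥ ↦ 0`). -/
theorem uniform_truncation (Γ : Type) [Fintype Γ] [PartialOrder Γ] [OrderBot Γ]
    (rk : Γ → ℕ) (hrk0 : rk ⊥ = 0) (hrk : RankedWith Γ rk)
    (hU : Uniform Γ) (k : ℕ) :
    Uniform {y : Γ // k < rk y ∨ y = ⊥} ∧
    RankedWith {y : Γ // k < rk y ∨ y = ⊥}
      (fun z => if z.1 = ⊥ then 0 else rk z.1 - k) := by
  classical
  set T := {y : Γ // k < rk y ∨ y = ⊥} with hT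
  have hlt : ∀ {a b : Γ}, a < b → rk a < rk b := fun h => rk_lt_of_lt rk hrk h
  have hne_bot : ∀ c : Γ, c ≠ ⊥ → 0 < rk c := by
    intro c hc
    have := hlt (bot_lt_iff_ne_bot.2 hc)
    omega
  have hbot_of_rk : ∀ c : Γ, rk c = 0 → c = ⊥ := by
    intro c h
    by_contra hc
    exact absurd h (by have := hne_bot c hc; omega)
  -- covers in T vs covers in Γ
  have hcov_of : ∀ u x : T, u.1 ≠ ⊥ → u ⋖ x → u.1 ⋖ x.1 := by
    intro u x hu h
    refine ⟨h.1, ?_⟩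
    intro c h1 h2
    have hck : k < rk c := lt_of_lt_of_le (u.2.resolve_right hu) (hlt h1).le
    exact h.2 (show u < (⟨c, Or.inl hck⟩ : T) from h1) (show (⟨c, Or.inl hck⟩ : T) < x from h2)
  have hcov_to : ∀ u x : T, u.1 ⋖ x.1 → u ⋖ x := by
    intro u x h
    exact ⟨h.1, fun c h1 h2 => h.2 h1 h2⟩
  have hbotcov : ∀ x : T, (⟨⊥, Or.inr rfl⟩ : T) ⋖ x → rk x.1 = k + 1 := by
    intro x h
    have hx : (⊥ : Γ) < x.1 := h.1
    have hxne : x.1 ≠ ⊥ := fun he => absurd (he ▸ hx) (lt_irrefl _)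
    have hxk : k < rk x.1 := x.2.resolve_right hxne
    by_contra hne
    obtain ⟨c, _, hcx⟩ := exists_le_covBy_of_lt hx
    have h1 : rk x.1 = rk c + 1 := hrk c x.1 hcx
    have hck : k < rk c := by omega
    have hcne : c ≠ ⊥ := fun he => by
      rw [he, hrk0] at hck; omega
    exact h.2 (show (⟨⊥, Or.inr rfl⟩ : T) < (⟨c, Or.inl hck⟩ : T) from bot_lt_iff_ne_bot.2 hcne)
      (show (⟨c, Or.inl hck⟩ : T) < x from hcx.lt)
  have hbotcov' : ∀ u : T, rk u.1 = k + 1 → (⟨⊥, Or.inr rfl⟩ : T) ⋖ u := by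
    intro u hu
    have hune : u.1 ≠ ⊥ := fun he => by rw [he, hrk0] at hu; omega
    refine ⟨bot_lt_iff_ne_bot.2 hune, ?_⟩
    intro c h1 h2
    have hcne : c.1 ≠ ⊥ := by
      intro he
      have hce : c = (⟨⊥, Or.inr rfl⟩ : T) := Subtype.ext he
      rw [hce] at h1
      exact absurd h1 (lt_irrefl _)
    have := c.2.resolve_right hcne
    have := hlt (show c.1 < u.1 from h2)
    omega
  constructor
  · -- Uniform
    intro x a b hax hbx
    have hxne : x.1 ≠ ⊥ := by
      intro he
      have : a.1 < x.1 := hax.lt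
      rw [he] at this
      exact absurd this (not_lt_bot)
    have hxk : k < rk x.1 := x.2.resolve_right hxne
    by_cases hx1 : rk x.1 = k + 1
    · -- everything covered is ⊥
      have habot : ∀ u : T, u ⋖ x → u.1 = ⊥ := by
        intro u hu
        by_contra hune
        have h1 := hcov_of u x hune hu
        have h2 : rk x.1 = rk u.1 + 1 := hrk _ _ h1
        have := u.2.resolve_right hune
        omega
      have : a = b := Subtype.ext ((habot a hax).trans (habot b hbx).symm)
      rw [this]
      exact Relation.EqvGen.refl _
    · -- rk x.1 ≥ k + 2
      have hane : a.1 ≠ ⊥ := by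
        intro he
        exact hx1 (hbotcov x (by rwa [show (⟨⊥, Or.inr rfl⟩ : T) = a from (Subtype.ext he).symm]))
      have hbne : b.1 ≠ ⊥ := by
        intro he
        exact hx1 (hbotcov x (by rwa [show (⟨⊥, Or.inr rfl⟩ : T) = b from (Subtype.ext he).symm]))
      set P : Γ → Γ → Prop := fun u w => u ⋖ x.1 ∧ w ⋖ x.1 ∧ ∃ c, c ⋖ u ∧ c ⋖ w with hP
      set R : T → T → Prop := fun u w => u ⋖ x ∧ w ⋖ x ∧ ∃ c, c ⋖ u ∧ c ⋖ w with hR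
      have main : Relation.EqvGen P a.1 b.1 :=
        hU x.1 a.1 b.1 (hcov_of a x hane hax) (hcov_of b x hbne hbx)
      have step : ∀ u w : Γ, P u w →
          (k < rk u ∨ u = ⊥) ∧ (k < rk w ∨ w = ⊥) ∧
            ∀ hu hw, R ⟨u, hu⟩ ⟨w, hw⟩ := by
        intro u w hp
        obtain ⟨hux, hwx, c, hcu, hcw⟩ := hp
        have h1 : rk x.1 = rk u + 1 := hrk _ _ hux
        have h2 : rk x.1 = rk w + 1 := hrk _ _ hwx
        have huk : k < rk u := by omega
        have hwk : k < rk w := by omega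
        refine ⟨Or.inl huk, Or.inl hwk, fun hu hw => ?_⟩
        refine ⟨hcov_to ⟨u, hu⟩ x hux, hcov_to ⟨w, hw⟩ x hwx, ?_⟩
        have h3 : rk u = rk c + 1 := hrk _ _ hcu
        by_cases hc : k < rk c
        · exact ⟨⟨c, Or.inl hc⟩, hcov_to _ _ hcu, hcov_to _ _ hcw⟩
        · -- rk c ≤ k, so rk u = rk w = k + 1
          have h4 : rk w = rk c + 1 := hrk _ _ hcw
          exact ⟨⟨⊥, Or.inr rfl⟩, hbotcov' ⟨u, hu⟩ (show rk u = k + 1 by omega),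
            hbotcov' ⟨w, hw⟩ (show rk w = k + 1 by omega)⟩
      have claim : ∀ u w : Γ, Relation.EqvGen P u w → u = w ∨
          ((k < rk u ∨ u = ⊥) ∧ (k < rk w ∨ w = ⊥) ∧
            ∀ hu hw, Relation.EqvGen R ⟨u, hu⟩ ⟨w, hw⟩) := by
        intro u w h
        induction h with
        | rel u w h =>
          obtain ⟨hu, hw, hr⟩ := step u w h
          exact Or.inr ⟨hu, hw, fun h1 h2 => Relation.EqvGen.rel _ _ (hr h1 h2)⟩
        | refl u => exact Or.inl rfl
        | symm u w _ ih =>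
          rcases ih with rfl | ⟨hu, hw, hr⟩
          · exact Or.inl rfl
          · exact Or.inr ⟨hw, hu, fun h1 h2 => Relation.EqvGen.symm _ _ (hr h2 h1)⟩
        | trans u v w _ _ ih1 ih2 =>
          rcases ih1 with rfl | ⟨hu, hv, hr1⟩
          · exact ih2
          · rcases ih2 with rfl | ⟨hv', hw, hr2⟩
            · exact Or.inr ⟨hu, hv, hr1⟩
            · exact Or.inr ⟨hu, hw, fun h1 h2 =>
                Relation.EqvGen.trans _ ⟨v, hv⟩ _ (hr1 h1 hv) (hr2 hv h2)⟩
      rcases claim a.1 b.1 main with he | ⟨hu, hw, hr⟩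
      · rw [Subtype.ext he]
        exact Relation.EqvGen.refl _
      · have := hr a.2 b.2
        simpa using this
  · -- RankedWith
    intro a b hab
    have hbne : b.1 ≠ ⊥ := by
      intro he
      have : a.1 < b.1 := hab.lt
      rw [he] at this
      exact absurd this (not_lt_bot)
    have hbk : k < rk b.1 := b.2.resolve_right hbne
    by_cases ha : a.1 = ⊥
    · have h1 : rk b.1 = k + 1 :=
        hbotcov b (by rwa [show (⟨⊥, Or.inr rfl⟩ : T) = a from (Subtype.ext ha).symm])
      simp only [ha, hbne, if_true, if_false, if_pos, if_neg]
      omega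
    · have h1 := hcov_of a b ha hab
      have h2 : rk b.1 = rk a.1 + 1 := hrk _ _ h1
      have hak : k < rk a.1 := a.2.resolve_right ha
      simp only [ha, hbne, if_false, if_neg]
      omega

end SplittingAlg
end
end

section
/- Let Γ and Ω be finite uniform ranked posets with minimal elements *_Γ, *_Ω, and fix rank-1 elements v ∈ Γ, v' ∈ Ω. Form Θ = Γ ∨_{(v,v')} Ω by identifying *_Γ with *_Ω and v with v', with x < y in Θ iff x < y in Γ or in Ω. Then Θ is a uniform finite ranked poset, and the geometric realization of its order complex Δ(Θ \ {*}) is the wedge X_Γ ∨ X_Ω of the realizations of Δ(Γ \ {*_Γ}) and Δ(Ω \ {*_Ω}) at the common rank-1 vertex. -/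
open scoped Classical DirectSum
noncomputable section
namespace SplittingAlg

variable (Γ : Type) [Fintype Γ] [PartialOrder Γ] [OrderBot Γ]
variable (Ω : Type) [Fintype Ω] [PartialOrder Ω] [OrderBot Ω]
variable (v : Γ) (v' : Ω)

/-- The underlying set of the wedge `Γ ∨_{(v,v')} Ω`: the disjoint union of `Γ` and `Ω`
with `⊥_Ω` identified with `⊥_Γ` and `v'` identified with `v`. -/
def Wedge := Γ ⊕ {w : Ω // w ≠ ⊥ ∧ w ≠ v'}

instance : Fintype (Wedge Γ Ω v') := by unfold Wedge; infer_instance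

/-- The order on the wedge: two elements are comparable iff they are comparable in `Γ`
or in `Ω` (where `⊥_Γ` plays the role of `⊥_Ω` and `v` the role of `v'`). -/
def wle : Wedge Γ Ω v' → Wedge Γ Ω v' → Prop
  | .inl a, .inl b => a ≤ b
  | .inl a, .inr b => a = ⊥ ∨ (a = v ∧ v' ≤ b.1)
  | .inr _, .inl _ => False
  | .inr a, .inr b => a.1 ≤ b.1

variable (hv : ∀ a : Γ, a ≤ v → a = ⊥ ∨ a = v) (hv' : ∀ w : Ω, w ≤ v' → w = ⊥ ∨ w = v')

/-- The wedge as a partial order (for `v`, `v'` atoms of `Γ`, `Ω`). -/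
def wedgePO : PartialOrder (Wedge Γ Ω v') where
  le := wle Γ Ω v v'
  le_refl x := by cases x <;> simp [wle]
  le_trans x y z h1 h2 := by
    cases x with
    | inl a =>
      cases y with
      | inl b =>
        cases z with
        | inl c => exact le_trans h1 h2
        | inr c =>
          rcases h2 with h2 | ⟨rfl, h2⟩
          · subst h2; exact Or.inl (le_bot_iff.mp h1)
          · rcases hv a h1 with h | h
            · exact Or.inl h
            · exact Or.inr ⟨h, h2⟩
      | inr b =>
        cases z with
        | inl c => exact absurd h2 id
        | inr c =>
          rcases h1 with h1 | ⟨rfl, h1⟩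
          · exact Or.inl h1
          · exact Or.inr ⟨rfl, le_trans h1 h2⟩
    | inr a =>
      cases y with
      | inl b => exact absurd h1 id
      | inr b =>
        cases z with
        | inl c => exact absurd h2 id
        | inr c => exact le_trans h1 h2
  le_antisymm x y h1 h2 := by
    cases x with
    | inl a =>
      cases y with
      | inl b => exact congrArg Sum.inl (le_antisymm h1 h2)
      | inr b => exact absurd h2 id
    | inr a =>
      cases y with
      | inl b => exact absurd h1 id
      | inr b => exact congrArg Sum.inr (Subtype.ext (le_antisymm h1 h2))

/-- The wedge has `⊥ = ⊥_Γ` as unique minimal element. -/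
def wedgeOB : @OrderBot (Wedge Γ Ω v') (wedgePO Γ Ω v v' hv).toLE :=
  letI := wedgePO Γ Ω v v' hv
  { bot := Sum.inl ⊥
    bot_le := fun x => by
      cases x with
      | inl a => exact (bot_le (a := a) : a ≥ (⊥ : Γ))
      | inr a => exact Or.inl rfl }

/-- The rank function of the wedge. -/
def wrk (rkΓ : Γ → ℕ) (rkΩ : Ω → ℕ) : Wedge Γ Ω v' → ℕ :=
  Sum.elim rkΓ (fun w => rkΩ w.1)

/-- Membership in the `Γ`-part of the wedge. -/
def inGamma : Wedge Γ Ω v' → Prop := fun t => ∃ a : Γ, t = Sum.inl a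

/-- Membership in the `Ω`-part of the wedge (the common point `v̄` and `⊥` included). -/
def inOmega : Wedge Γ Ω v' → Prop :=
  fun t => (∃ w, t = Sum.inr w) ∨ t = Sum.inl v ∨ t = Sum.inl ⊥

end SplittingAlg
namespace SplittingAlg

/-!
The wedge `Θ` is the union of two lower sets: the image of `Γ` under `Sum.inl` and the image of
`Ω` under `wedgeInr v v'`, which sends `⊥ ↦ ⊥`, `v' ↦ v` and is an order embedding because `v`
and `v'` are atoms. An element covered by a point of a lower set lies in that lower set, and the
covering relation there is the one of the embedded poset; so uniformity and the rank condition at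
any point of `Θ` are read off in `Γ` or in `Ω`.
-/

open Set

section LowerSetEmbedding

variable {α β : Type} [PartialOrder α] [PartialOrder β] {f : α ↪o β}

theorem exists_covBy_of_covBy_apply (hf : IsLowerSet (range f)) {x : β} {b : α}
    (h : x ⋖ f b) : ∃ a, f a = x ∧ a ⋖ b := by
  obtain ⟨a, rfl⟩ := hf h.le ⟨b, rfl⟩
  exact ⟨a, rfl, (hf.ordConnected.apply_covBy_apply_iff f).1 h⟩

theorem rank_apply_eq_of_covBy (hf : IsLowerSet (range f)) {rk : β → ℕ}
    (hrk : RankedWith α (rk ∘ f)) {x : β} {b : α} (h : x ⋖ f b) : rk (f b) = rk x + 1 := by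
  obtain ⟨a, rfl, hab⟩ := exists_covBy_of_covBy_apply hf h
  exact hrk a b hab

theorem eqvGen_of_covBy_apply (hf : IsLowerSet (range f)) (hα : Uniform α) {b : α} {x y : β}
    (hx : x ⋖ f b) (hy : y ⋖ f b) :
    Relation.EqvGen (fun u w => u ⋖ f b ∧ w ⋖ f b ∧ ∃ c, c ⋖ u ∧ c ⋖ w) x y := by
  obtain ⟨a, rfl, hab⟩ := exists_covBy_of_covBy_apply hf hx
  obtain ⟨c, rfl, hcb⟩ := exists_covBy_of_covBy_apply hf hy
  have hcov {p q : α} : p ⋖ q → f p ⋖ f q := (hf.ordConnected.apply_covBy_apply_iff f).2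
  -- `EqvGen r` is the kernel of `Quot.mk r`, so it is transported along `Quot.map f`.
  refine Quot.eqvGen_exact (congrArg (Quot.map f ?_) (Quot.eqvGen_sound (hα b a c hab hcb)))
  rintro p q ⟨hp, hq, d, hdp, hdq⟩
  exact ⟨hcov hp, hcov hq, f d, hcov hdp, hcov hdq⟩

end LowerSetEmbedding

section LowerSetCover

variable {α γ β : Type} [PartialOrder α] [PartialOrder γ] [PartialOrder β]
  {f : α ↪o β} {g : γ ↪o β}

theorem uniform_of_isLowerSet_range (hf : IsLowerSet (range f)) (hg : IsLowerSet (range g))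
    (hfg : ∀ y, y ∈ range f ∨ y ∈ range g) (hα : Uniform α) (hγ : Uniform γ) : Uniform β := by
  intro y
  rcases hfg y with ⟨b, rfl⟩ | ⟨b, rfl⟩
  · exact fun _ _ => eqvGen_of_covBy_apply hf hα
  · exact fun _ _ => eqvGen_of_covBy_apply hg hγ

theorem rankedWith_of_isLowerSet_range (hf : IsLowerSet (range f)) (hg : IsLowerSet (range g))
    (hfg : ∀ y, y ∈ range f ∨ y ∈ range g) {rk : β → ℕ} (hα : RankedWith α (rk ∘ f))
    (hγ : RankedWith γ (rk ∘ g)) : RankedWith β rk := by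
  intro x y
  rcases hfg y with ⟨b, rfl⟩ | ⟨b, rfl⟩
  · exact rank_apply_eq_of_covBy hf hα
  · exact rank_apply_eq_of_covBy hg hγ

end LowerSetCover

section Wedge

variable {Γ : Type} [PartialOrder Γ] [OrderBot Γ] {Ω : Type} [PartialOrder Ω] [OrderBot Ω]

def wedgeInr (v : Γ) (v' : Ω) (w : Ω) : Wedge Γ Ω v' :=
  if h₁ : w = ⊥ then .inl ⊥ else if h₂ : w = v' then .inl v else .inr ⟨w, h₁, h₂⟩

variable {v : Γ} {v' : Ω}

theorem wedgeInr_bot : wedgeInr v v' ⊥ = .inl ⊥ := dif_pos rfl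

theorem wedgeInr_self (hv'₀ : v' ≠ ⊥) : wedgeInr v v' v' = .inl v :=
  (dif_neg hv'₀).trans (dif_pos rfl)

theorem wedgeInr_val (w : {w : Ω // w ≠ ⊥ ∧ w ≠ v'}) : wedgeInr v v' w.1 = .inr w :=
  (dif_neg w.2.1).trans (dif_neg w.2.2)

theorem wle_wedgeInr_iff (hv₀ : v ≠ ⊥) (hv' : ∀ w : Ω, w ≤ v' → w = ⊥ ∨ w = v') (a b : Ω) :
    wle Γ Ω v v' (wedgeInr v v' a) (wedgeInr v v' b) ↔ a ≤ b := by
  have ha := hv' a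
  by_cases ha₁ : a = ⊥ <;> by_cases ha₂ : a = v' <;> by_cases hb₁ : b = ⊥ <;>
    by_cases hb₂ : b = v' <;> simp_all [wedgeInr, wle]

theorem exists_wedgeInr_eq_of_wle (hv : ∀ a : Γ, a ≤ v → a = ⊥ ∨ a = v) (hv'₀ : v' ≠ ⊥)
    {x : Wedge Γ Ω v'} {b : Ω} (h : wle Γ Ω v v' x (wedgeInr v v' b)) :
    ∃ a, wedgeInr v v' a = x := by
  rcases x with a | w
  · have ha : a = ⊥ ∨ a = v := by
      by_cases hb₁ : b = ⊥ <;> by_cases hb₂ : b = v' <;> simp_all [wedgeInr, wle]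
      exact h.imp_right And.left
    rcases ha with rfl | rfl
    · exact ⟨⊥, wedgeInr_bot⟩
    · exact ⟨v', wedgeInr_self hv'₀⟩
  · exact ⟨w.1, wedgeInr_val w⟩

theorem wrk_wedgeInr {rkΓ : Γ → ℕ} {rkΩ : Ω → ℕ} (hrkΓ0 : rkΓ ⊥ = 0) (hrkΩ0 : rkΩ ⊥ = 0)
    (hvrk : rkΓ v = 1) (hv'rk : rkΩ v' = 1) (w : Ω) :
    wrk Γ Ω v' rkΓ rkΩ (wedgeInr v v' w) = rkΩ w := by
  by_cases h₁ : w = ⊥ <;> by_cases h₂ : w = v' <;> simp_all [wedgeInr, wrk]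

theorem inGamma_and_inGamma_or_inOmega_and_inOmega {x y : Wedge Γ Ω v'} (hx : x ≠ .inl ⊥)
    (hxy : wle Γ Ω v v' x y) :
    (inGamma Γ Ω v' x ∧ inGamma Γ Ω v' y) ∨ (inOmega Γ Ω v v' x ∧ inOmega Γ Ω v v' y) := by
  rcases x with a | a <;> rcases y with b | b
  · exact .inl ⟨⟨a, rfl⟩, ⟨b, rfl⟩⟩
  · obtain rfl : a = v := (hxy.resolve_left (fun h => hx (congrArg _ h))).1
    exact .inr ⟨.inr (.inl rfl), .inl ⟨b, rfl⟩⟩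
  · exact hxy.elim
  · exact .inr ⟨.inl ⟨a, rfl⟩, .inl ⟨b, rfl⟩⟩

theorem eq_inl_of_inGamma_of_inOmega {t : Wedge Γ Ω v'} (ht : t ≠ .inl ⊥)
    (hΓ : inGamma Γ Ω v' t) (hΩ : inOmega Γ Ω v v' t) : t = .inl v := by
  obtain ⟨a, rfl⟩ := hΓ
  rcases hΩ with ⟨w, hw⟩ | h | h
  · exact Sum.inl_ne_inr hw |>.elim
  · exact h
  · exact (ht h).elim

end Wedge

theorem wedge_uniform_and_order_complex_general (Γ : Type) [PartialOrder Γ] [OrderBot Γ]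
    (Ω : Type) [PartialOrder Ω] [OrderBot Ω]
    (rkΓ : Γ → ℕ) (hrkΓ0 : rkΓ ⊥ = 0) (hrkΓ : RankedWith Γ rkΓ)
    (rkΩ : Ω → ℕ) (hrkΩ0 : rkΩ ⊥ = 0) (hrkΩ : RankedWith Ω rkΩ)
    (hUΓ : Uniform Γ) (hUΩ : Uniform Ω)
    (v : Γ) (v' : Ω) (hvrk : rkΓ v = 1) (hv'rk : rkΩ v' = 1)
    (hv : ∀ a : Γ, a ≤ v → a = ⊥ ∨ a = v) (hv' : ∀ w : Ω, w ≤ v' → w = ⊥ ∨ w = v') :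
    @Uniform (Wedge Γ Ω v') (wedgePO Γ Ω v v' hv) ∧
    @RankedWith (Wedge Γ Ω v') (wedgePO Γ Ω v v' hv) (wrk Γ Ω v' rkΓ rkΩ) ∧
    (∀ x y : Wedge Γ Ω v', x ≠ Sum.inl ⊥ → (wedgePO Γ Ω v v' hv).lt x y →
      ((inGamma Γ Ω v' x ∧ inGamma Γ Ω v' y) ∨ (inOmega Γ Ω v v' x ∧ inOmega Γ Ω v v' y))) ∧
    (∀ t : Wedge Γ Ω v', t ≠ Sum.inl ⊥ → inGamma Γ Ω v' t → inOmega Γ Ω v v' t →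
      t = Sum.inl v) := by
  let _ := wedgePO Γ Ω v v' hv
  have hv₀ : v ≠ ⊥ := fun h => by simp [h, hrkΓ0] at hvrk
  have hv'₀ : v' ≠ ⊥ := fun h => by simp [h, hrkΩ0] at hv'rk
  let ιΓ : Γ ↪o Wedge Γ Ω v' := .ofMapLEIff Sum.inl fun _ _ => Iff.rfl
  let ιΩ : Ω ↪o Wedge Γ Ω v' := .ofMapLEIff (wedgeInr v v') (wle_wedgeInr_iff hv₀ hv')
  have hΓ : IsLowerSet (range ιΓ) := by
    rintro _ (a | w) h ⟨b, rfl⟩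
    exacts [⟨a, rfl⟩, h.elim]
  have hΩ : IsLowerSet (range ιΩ) := fun _ _ h ⟨b, hb⟩ =>
    exists_wedgeInr_eq_of_wle hv hv'₀ (hb ▸ h)
  have hcover : ∀ y, y ∈ range ιΓ ∨ y ∈ range ιΩ := by
    rintro (a | w)
    exacts [.inl ⟨a, rfl⟩, .inr ⟨w.1, wedgeInr_val w⟩]
  have hrk : wrk Γ Ω v' rkΓ rkΩ ∘ ιΩ = rkΩ :=
    funext (wrk_wedgeInr hrkΓ0 hrkΩ0 hvrk hv'rk)
  refine ⟨uniform_of_isLowerSet_range hΓ hΩ hcover hUΓ hUΩ,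
    rankedWith_of_isLowerSet_range hΓ hΩ hcover hrkΓ (by rwa [hrk]),
    fun x y hx hxy => inGamma_and_inGamma_or_inOmega_and_inOmega hx hxy.le,
    fun t => eq_inl_of_inGamma_of_inOmega⟩

/-- The wedge `Θ = Γ ∨_{(v,v')} Ω` of two finite uniform ranked posets along
rank-one elements `v ∈ Γ`, `v' ∈ Ω` is a uniform finite ranked poset, and its order complex is
the wedge of the order complexes of `Γ \ {⊥}` and `Ω \ {⊥}`: every pair of comparable elements
of `Θ \ {⊥}` lies entirely in the `Γ`-part or entirely in the `Ω`-part, and the two parts meet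
exactly in the common point `v̄ = v = v'`. -/
theorem wedge_uniform_and_order_complex (Γ : Type) [Fintype Γ] [PartialOrder Γ] [OrderBot Γ]
    (Ω : Type) [Fintype Ω] [PartialOrder Ω] [OrderBot Ω]
    (rkΓ : Γ → ℕ) (hrkΓ0 : rkΓ ⊥ = 0) (hrkΓ : RankedWith Γ rkΓ)
    (rkΩ : Ω → ℕ) (hrkΩ0 : rkΩ ⊥ = 0) (hrkΩ : RankedWith Ω rkΩ)
    (hUΓ : Uniform Γ) (hUΩ : Uniform Ω)
    (v : Γ) (v' : Ω) (hvrk : rkΓ v = 1) (hv'rk : rkΩ v' = 1)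
    (hv : ∀ a : Γ, a ≤ v → a = ⊥ ∨ a = v) (hv' : ∀ w : Ω, w ≤ v' → w = ⊥ ∨ w = v') :
    @Uniform (Wedge Γ Ω v') (wedgePO Γ Ω v v' hv) ∧
    @RankedWith (Wedge Γ Ω v') (wedgePO Γ Ω v v' hv) (wrk Γ Ω v' rkΓ rkΩ) ∧
    (∀ x y : Wedge Γ Ω v', x ≠ Sum.inl ⊥ → (wedgePO Γ Ω v v' hv).lt x y →
      ((inGamma Γ Ω v' x ∧ inGamma Γ Ω v' y) ∨ (inOmega Γ Ω v v' x ∧ inOmega Γ Ω v v' y))) ∧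
    (∀ t : Wedge Γ Ω v', t ≠ Sum.inl ⊥ → inGamma Γ Ω v' t → inOmega Γ Ω v v' t →
      t = Sum.inl v) :=
  wedge_uniform_and_order_complex_general Γ Ω rkΓ hrkΓ0 hrkΓ rkΩ hrkΩ0 hrkΩ hUΓ hUΩ v v' hvrk hv'rk
    hv hv'

end SplittingAlg
end
end
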